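/- arXiv:math/0512366 — 4 statements merged into one kernel-verified Lean document; each statement's English description precedes it below -/
import Mathlib

section
/- Every subset I ⊆ {2,...,n-1} with no two consecutive elements is realized as the interior peak set of some permutation π ∈ S_n; i.e., the map π ↦ Pe(π) from S_n to subsets of {2,...,n-1} with no consecutive elements is surjective. -/
/-!
Swap `i` and `i + 1` for every `i ∈ I`. Sparseness makes these transpositions disjoint. Each
`i ∈ I` then carries the value `i + 1` between neighbours of value at most `i`, so it is a peak.
A position `i ∉ I` carries a value at most `i` while position `i + 1` carries one at least
`i + 1`, so it is not a peak.
-/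

/-- A permutation of `{1,…,n}`, modeled as a permutation of `ℕ` fixing `0` and all `i > n`. -/
def IsSn (n : ℕ) (π : Equiv.Perm ℕ) : Prop := ∀ i : ℕ, i = 0 ∨ n < i → π i = i

/-- The interior peak set `Pe(π) = {i ∈ [2,n-1] : π(i-1) < π(i) > π(i+1)}`. -/
def intPeaks (n : ℕ) (π : Equiv.Perm ℕ) : Finset ℕ :=
  (Finset.Icc 2 (n - 1)).filter fun i => π (i - 1) < π i ∧ π (i + 1) < π i

def swapSucc (I : Finset ℕ) (k : ℕ) : ℕ :=
  if k ∈ I then k + 1 else if k - 1 ∈ I then k - 1 else k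

section swapSucc

variable {I : Finset ℕ}

theorem swapSucc_of_mem {k : ℕ} (hk : k ∈ I) : swapSucc I k = k + 1 := if_pos hk

theorem swapSucc_of_not_mem {k : ℕ} (hk : k ∉ I) (hk' : k - 1 ∉ I) : swapSucc I k = k := by
  simp only [swapSucc, if_neg hk, if_neg hk']

theorem swapSucc_succ_of_mem {k : ℕ} (hk : k ∈ I) (hk' : k + 1 ∉ I) : swapSucc I (k + 1) = k := by
  simp only [swapSucc, if_neg hk', Nat.add_sub_cancel, if_pos hk]

theorem swapSucc_le_succ (k : ℕ) : swapSucc I k ≤ k + 1 := by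
  unfold swapSucc; split_ifs <;> omega

theorem swapSucc_le_self {k : ℕ} (hk : k ∉ I) : swapSucc I k ≤ k := by
  unfold swapSucc; split_ifs <;> omega

theorem lt_swapSucc_succ {k : ℕ} (hk : k ∉ I) : k < swapSucc I (k + 1) := by
  unfold swapSucc
  split_ifs with h h'
  · omega
  · exact absurd (by simpa using h') hk
  · omega

variable (hsparse : ∀ i ∈ I, i + 1 ∉ I)
include hsparse

theorem swapSucc_involutive : Function.Involutive (swapSucc I) := by
  intro k
  by_cases hk : k ∈ I
  · rw [swapSucc_of_mem hk, swapSucc_succ_of_mem hk (hsparse k hk)]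
  by_cases hk' : k - 1 ∈ I
  · have hk0 : k ≠ 0 := by rintro rfl; exact hk hk'
    obtain ⟨j, rfl⟩ : ∃ j, k = j + 1 := ⟨k - 1, by omega⟩
    rw [Nat.add_sub_cancel] at hk'
    rw [swapSucc_succ_of_mem hk' hk, swapSucc_of_mem hk']
  · rw [swapSucc_of_not_mem hk hk', swapSucc_of_not_mem hk hk']

theorem swapSucc_isPeak_iff {i : ℕ} (hi : 0 < i) :
    swapSucc I (i - 1) < swapSucc I i ∧ swapSucc I (i + 1) < swapSucc I i ↔ i ∈ I := by
  constructor
  · rintro ⟨-, hpeak⟩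
    by_contra hiI
    have := swapSucc_le_self hiI
    have := lt_swapSucc_succ hiI
    omega
  · intro hiI
    have := swapSucc_le_succ (I := I) (i - 1)
    rw [swapSucc_of_mem hiI, swapSucc_succ_of_mem hiI (hsparse i hiI)]
    omega

end swapSucc

/-- Every sparse subset of `{2,…,n-1}` is the interior peak set of some permutation in `S_n`. -/
theorem interior_peaks_surjective (n : ℕ) (I : Finset ℕ) (hI : I ⊆ Finset.Icc 2 (n - 1))
    (hsparse : ∀ i ∈ I, i + 1 ∉ I) :
    ∃ π : Equiv.Perm ℕ, IsSn n π ∧ intPeaks n π = I := by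
  have hmem : ∀ {i}, i ∈ I → 2 ≤ i ∧ i ≤ n - 1 := fun hi => Finset.mem_Icc.mp (hI hi)
  refine ⟨(swapSucc_involutive hsparse).toPerm, fun i hi => ?_, ?_⟩
  · apply swapSucc_of_not_mem <;> intro h <;> have := hmem h <;> omega
  · refine Finset.ext fun i => ?_
    rw [intPeaks, Finset.mem_filter, Finset.mem_Icc, Function.Involutive.coe_toPerm]
    constructor
    · rintro ⟨⟨hi2, -⟩, hpeak⟩
      exact (swapSucc_isPeak_iff hsparse (by omega)).mp hpeak
    · intro hiI
      exact ⟨hmem hiI, (swapSucc_isPeak_iff hsparse (by have := hmem hiI; omega)).mpr hiI⟩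
end

section
/- Fundamental lemma of enriched P-partitions: for any finite labeled poset P on {1,...,n} and any countable totally ordered set S, the set of enriched P-partitions E(P;S) is the disjoint union over linear extensions π ∈ L(P) of the sets E(π;S). -/
open Finset
open scoped Classical

/-- `S' = two interleaved signed copies of S`: a value is a pair `(s, ε)` with sign
`ε : Bool` (`false` = minus, `true` = plus), ordered `s⁻ < s⁺ < t⁻ < t⁺` for `s < t`. -/
def sLT {α : Type*} [LinearOrder α] (u v : α × Bool) : Prop :=
  u.1 < v.1 ∨ (u.1 = v.1 ∧ u.2 = false ∧ v.2 = true)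

/-- `u ≤ v` in `S'`. -/
def sLE {α : Type*} [LinearOrder α] (u v : α × Bool) : Prop := sLT u v ∨ u = v

/-- `u ≤⁺ v`: `u < v`, or `u = v` with positive sign. -/
def sLEp {α : Type*} [LinearOrder α] (u v : α × Bool) : Prop := sLT u v ∨ (u = v ∧ v.2 = true)

/-- `u ≤⁻ v`: `u < v`, or `u = v` with negative sign. -/
def sLEm {α : Type*} [LinearOrder α] (u v : α × Bool) : Prop := sLT u v ∨ (u = v ∧ v.2 = false)

/-- `f : {1,…,n} → S'` is an enriched `P`-partition for the strict partial order `r` on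
`{1,…,n}`: for `i <_P j`, `f i ≤ f j`, with `f i ≤⁺ f j` when `i < j` in `ℤ` and
`f i ≤⁻ f j` when `i > j` in `ℤ`. -/
def EPP {α : Type*} [LinearOrder α] (n : ℕ) (r : ℕ → ℕ → Prop) (f : ℕ → α × Bool) : Prop :=
  ∀ i ∈ Finset.Icc 1 n, ∀ j ∈ Finset.Icc 1 n, r i j →
    sLE (f i) (f j) ∧ (i < j → sLEp (f i) (f j)) ∧ (j < i → sLEm (f i) (f j))

section Aux

variable {α : Type*} [LinearOrder α]

lemma sLT_irrefl (u : α × Bool) : ¬ sLT u u := by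
  rintro (h | ⟨-, h1, h2⟩)
  · exact lt_irrefl _ h
  · rw [h1] at h2; exact Bool.false_ne_true h2

lemma sLT_trans {u v w : α × Bool} (h1 : sLT u v) (h2 : sLT v w) : sLT u w := by
  rcases h1 with h1 | ⟨e1, a1, b1⟩ <;> rcases h2 with h2 | ⟨e2, a2, b2⟩
  · exact Or.inl (lt_trans h1 h2)
  · exact Or.inl (e2 ▸ h1)
  · exact Or.inl (e1 ▸ h2)
  · rw [b1] at a2; exact absurd a2 (by simp)

lemma sLT_asymm {u v : α × Bool} (h1 : sLT u v) (h2 : sLT v u) : False :=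
  sLT_irrefl u (sLT_trans h1 h2)

lemma sLT_total {u v : α × Bool} (h : u ≠ v) : sLT u v ∨ sLT v u := by
  rcases lt_trichotomy u.1 v.1 with h1 | h1 | h1
  · exact Or.inl (Or.inl h1)
  · have h2 : u.2 ≠ v.2 := fun e => h (Prod.ext h1 e)
    rcases Bool.eq_false_or_eq_true u.2 with hu | hu <;>
      rcases Bool.eq_false_or_eq_true v.2 with hv | hv
    · exact absurd (hu.trans hv.symm) h2
    · exact Or.inr (Or.inr ⟨h1.symm, hv, hu⟩)
    · exact Or.inl (Or.inr ⟨h1, hu, hv⟩)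
    · exact absurd (hu.trans hv.symm) h2
  · exact Or.inr (Or.inl h1)

/-- The canonical comparison on labels induced by `f`. -/
def prec (f : ℕ → α × Bool) (i j : ℕ) : Prop :=
  sLT (f i) (f j) ∨ (f i = f j ∧ (((f i).2 = true ∧ i < j) ∨ ((f i).2 = false ∧ j < i)))

lemma prec_irrefl (f : ℕ → α × Bool) (i : ℕ) : ¬ prec f i i := by
  rintro (h | ⟨-, ⟨-, h⟩ | ⟨-, h⟩⟩)
  · exact sLT_irrefl _ h
  · omega
  · omega

lemma prec_asymm {f : ℕ → α × Bool} {i j : ℕ} (h1 : prec f i j) (h2 : prec f j i) : False := by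
  rcases h1 with h1 | ⟨e1, c1⟩ <;> rcases h2 with h2 | ⟨e2, c2⟩
  · exact sLT_asymm h1 h2
  · exact sLT_irrefl _ (e2 ▸ h1)
  · exact sLT_irrefl _ (e1 ▸ h2)
  · rw [e1] at c1
    rcases c1 with ⟨a1, b1⟩ | ⟨a1, b1⟩ <;> rcases c2 with ⟨a2, b2⟩ | ⟨a2, b2⟩
    · omega
    · rw [a1] at a2; exact absurd a2 (by simp)
    · rw [a1] at a2; exact absurd a2 (by simp)
    · omega

lemma prec_trans {f : ℕ → α × Bool} {i j k : ℕ} (h1 : prec f i j) (h2 : prec f j k) :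
    prec f i k := by
  rcases h1 with h1 | ⟨e1, c1⟩ <;> rcases h2 with h2 | ⟨e2, c2⟩
  · exact Or.inl (sLT_trans h1 h2)
  · exact Or.inl (e2 ▸ h1)
  · exact Or.inl (e1 ▸ h2)
  · have c2' : ((f i).2 = true ∧ j < k) ∨ ((f i).2 = false ∧ k < j) := by
      rw [e1]; exact c2
    refine Or.inr ⟨e1.trans e2, ?_⟩
    rcases c1 with ⟨a1, b1⟩ | ⟨a1, b1⟩ <;> rcases c2' with ⟨a2, b2⟩ | ⟨a2, b2⟩
    · exact Or.inl ⟨a1, by omega⟩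
    · rw [a1] at a2; exact absurd a2 (by simp)
    · rw [a1] at a2; exact absurd a2 (by simp)
    · exact Or.inr ⟨a1, by omega⟩

lemma prec_total {f : ℕ → α × Bool} {i j : ℕ} (h : i ≠ j) : prec f i j ∨ prec f j i := by
  by_cases e : f i = f j
  · rcases Bool.eq_false_or_eq_true (f i).2 with hb | hb
    · rcases Nat.lt_or_ge i j with hij | hij
      · exact Or.inl (Or.inr ⟨e, Or.inl ⟨hb, hij⟩⟩)
      · exact Or.inr (Or.inr ⟨e.symm, Or.inl ⟨e ▸ hb, by omega⟩⟩)
    · rcases Nat.lt_or_ge i j with hij | hij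
      · exact Or.inr (Or.inr ⟨e.symm, Or.inr ⟨e ▸ hb, hij⟩⟩)
      · exact Or.inl (Or.inr ⟨e, Or.inr ⟨hb, by omega⟩⟩)
  · rcases sLT_total e with h1 | h1
    · exact Or.inl (Or.inl h1)
    · exact Or.inr (Or.inl h1)

/-- If an enriched `π`-partition, then the order of `π` refines `prec`. -/
lemma prec_key {f : ℕ → α × Bool} {n : ℕ} {i j : ℕ} (hi : i ∈ Finset.Icc 1 n)
    (hj : j ∈ Finset.Icc 1 n)
    (h : sLE (f i) (f j) ∧ (i < j → sLEp (f i) (f j)) ∧ (j < i → sLEm (f i) (f j))) :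
    ¬ prec f j i := by
  rintro (hp | ⟨e, ⟨a, b⟩ | ⟨a, b⟩⟩)
  · rcases h.1 with h1 | h1
    · exact sLT_asymm hp h1
    · exact sLT_irrefl _ (h1 ▸ hp)
  · -- f j = f i, (f j).2 = true, j < i : contradicts sLEm (f i) (f j)
    rcases h.2.2 b with h1 | ⟨-, h1⟩
    · exact sLT_irrefl _ (e ▸ h1)
    · rw [a] at h1; exact absurd h1 (by simp)
  · rcases h.2.1 b with h1 | ⟨-, h1⟩
    · exact sLT_irrefl _ (e ▸ h1)
    · rw [a] at h1; exact absurd h1 (by simp)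

/-- Rank formula: an injection of `Icc 1 n` into itself is determined by rank. -/
lemma rank_eq {n : ℕ} {σ : ℕ → ℕ} (hmaps : ∀ i ∈ Finset.Icc 1 n, σ i ∈ Finset.Icc 1 n)
    (hinj : Set.InjOn σ (Finset.Icc 1 n)) {i : ℕ} (hi : i ∈ Finset.Icc 1 n) :
    σ i = ((Finset.Icc 1 n).filter (fun j => σ j ≤ σ i)).card := by
  have hbij : Set.BijOn σ (Finset.Icc 1 n) (Finset.Icc 1 n) :=
    ((Finset.Icc 1 n).finite_toSet.injOn_iff_bijOn_of_mapsTo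
      (fun x hx => by exact_mod_cast hmaps x (by exact_mod_cast hx))).mp hinj
  have himg : ((Finset.Icc 1 n).filter (fun j => σ j ≤ σ i)).image σ = Finset.Icc 1 (σ i) := by
    ext m
    constructor
    · intro hm
      rw [Finset.mem_image] at hm
      obtain ⟨j, hj, rfl⟩ := hm
      rw [Finset.mem_filter] at hj
      have := hmaps j hj.1
      rw [Finset.mem_Icc] at this ⊢
      exact ⟨this.1, hj.2⟩
    · intro hm
      rw [Finset.mem_Icc] at hm
      have hσi := hmaps i hi
      rw [Finset.mem_Icc] at hσi
      have hmA : m ∈ Finset.Icc 1 n := Finset.mem_Icc.mpr ⟨hm.1, le_trans hm.2 hσi.2⟩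
      obtain ⟨j, hj, hjm⟩ := hbij.surjOn (by exact_mod_cast hmA)
      rw [Finset.mem_image]
      exact ⟨j, Finset.mem_filter.mpr ⟨by exact_mod_cast hj, by rw [hjm]; exact hm.2⟩, hjm⟩
  have hcard : ((Finset.Icc 1 n).filter (fun j => σ j ≤ σ i)).card
      = (Finset.Icc 1 (σ i)).card := by
    rw [← himg]
    exact (Finset.card_image_of_injOn (hinj.mono (by
      intro x hx
      simp only [Finset.coe_filter, Set.mem_setOf_eq] at hx
      exact_mod_cast hx.1))).symm
  rw [hcard, Nat.card_Icc]
  have := hmaps i hi; rw [Finset.mem_Icc] at this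
  omega

end Aux

/-- Fundamental lemma of enriched `P`-partitions: `E(P;S)` is the disjoint union of the
`E(π;S)` over linear extensions `π ∈ L(P)`; i.e. `f` is an enriched `P`-partition iff it is
an enriched `π`-partition for exactly one linear extension `π` of `P`. -/
theorem fundamental_lemma_enriched {S : Type*} [LinearOrder S] [Countable S]
    (n : ℕ) (r : ℕ → ℕ → Prop)
    (hirr : ∀ i, ¬ r i i) (htrans : ∀ a b c, r a b → r b c → r a c)
    (hdom : ∀ i j, r i j → i ∈ Finset.Icc 1 n ∧ j ∈ Finset.Icc 1 n)
    (f : ℕ → S × Bool) :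
    EPP n r f ↔
      ∃! π : Equiv.Perm ℕ,
        (IsSn n π ∧ ∀ i j, r i j → π.symm i < π.symm j) ∧
        EPP n (fun i j => π.symm i < π.symm j) f := by
  set A := Finset.Icc 1 n with hA
  -- the rank function of `prec f` on `A`
  set g : ℕ → ℕ := fun i => if i ∈ A then (A.filter (fun j => prec f j i ∨ j = i)).card else i
    with hg
  -- basic facts about g
  have hgA : ∀ i ∈ A, g i = (A.filter (fun j => prec f j i ∨ j = i)).card := by
    intro i hi; simp [hg, hi]
  have hgout : ∀ i, i ∉ A → g i = i := by intro i hi; simp [hg, hi]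
  have hmono : ∀ i ∈ A, ∀ j ∈ A, prec f i j → g i < g j := by
    intro i hi j hj hij
    rw [hgA i hi, hgA j hj]
    apply Finset.card_lt_card
    constructor
    · intro k hk
      rw [Finset.mem_filter] at *
      rcases hk with ⟨hk1, hk2 | rfl⟩
      · exact ⟨hk1, Or.inl (prec_trans hk2 hij)⟩
      · exact ⟨hk1, Or.inl hij⟩
    · intro hsub
      have : j ∈ A.filter (fun k => prec f k i ∨ k = i) :=
        hsub (Finset.mem_filter.mpr ⟨hj, Or.inr rfl⟩)
      rw [Finset.mem_filter] at this
      rcases this.2 with h | rfl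
      · exact prec_asymm hij h
      · exact prec_irrefl f j hij
  have hgmem : ∀ i ∈ A, g i ∈ A := by
    intro i hi
    rw [hgA i hi, hA, Finset.mem_Icc]
    constructor
    · have : i ∈ A.filter (fun j => prec f j i ∨ j = i) :=
        Finset.mem_filter.mpr ⟨hi, Or.inr rfl⟩
      exact Finset.card_pos.mpr ⟨i, this⟩
    · calc (A.filter (fun j => prec f j i ∨ j = i)).card ≤ A.card := Finset.card_filter_le _ _
        _ = n := by rw [hA, Nat.card_Icc]; omega
  have hginj : Function.Injective g := by
    intro a b hab
    by_cases ha : a ∈ A <;> by_cases hb : b ∈ A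
    · by_contra hne
      rcases prec_total (f := f) hne with h | h
      · exact absurd hab (Nat.ne_of_lt (hmono a ha b hb h))
      · exact absurd hab.symm (Nat.ne_of_lt (hmono b hb a ha h))
    · exact absurd (hab ▸ hgmem a ha) (by rw [hgout b hb]; exact hb)
    · exact absurd (hab ▸ hgmem b hb) (by rw [hgout a ha]; exact ha)
    · rw [hgout a ha, hgout b hb] at hab; exact hab
  have hgbij : Function.Bijective g := by
    refine ⟨hginj, ?_⟩
    intro m
    by_cases hm : m ∈ A
    · have hbij : Set.BijOn g A A :=
        (A.finite_toSet.injOn_iff_bijOn_of_mapsTo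
          (fun x hx => by exact_mod_cast hgmem x (by exact_mod_cast hx))).mp
          (hginj.injOn)
      obtain ⟨j, _, hj⟩ := hbij.surjOn (by exact_mod_cast hm)
      exact ⟨j, hj⟩
    · exact ⟨m, hgout m hm⟩
  -- the canonical permutation
  set σ : Equiv.Perm ℕ := Equiv.ofBijective g hgbij with hσ
  set π₀ : Equiv.Perm ℕ := σ.symm with hπ₀
  have hπ₀symm : ∀ i, π₀.symm i = g i := fun i => rfl
  have hgprec : ∀ i ∈ A, ∀ j ∈ A, (g i < g j ↔ prec f i j) := by
    intro i hi j hj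
    constructor
    · intro h
      have hne : i ≠ j := by rintro rfl; omega
      rcases prec_total (f := f) hne with hp | hp
      · exact hp
      · exact absurd h (by have := hmono j hj i hi hp; omega)
    · exact hmono i hi j hj
  have hπ₀Sn : IsSn n π₀ := by
    intro i hi
    have hiA : i ∉ A := by rw [hA, Finset.mem_Icc]; omega
    have : σ i = i := hgout i hiA
    rw [hπ₀]
    exact (Equiv.symm_apply_eq σ).mpr this.symm
  constructor
  · -- existence and uniqueness
    intro hEPP
    have hrprec : ∀ i j, r i j → prec f i j := by
      intro i j hij
      obtain ⟨hi, hj⟩ := hdom i j hij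
      obtain ⟨h1, h2, h3⟩ := hEPP i hi j hj hij
      have hne : i ≠ j := by rintro rfl; exact hirr i hij
      rcases Nat.lt_or_ge i j with hlt | hge
      · rcases h2 hlt with h | ⟨e, hb⟩
        · exact Or.inl h
        · exact Or.inr ⟨e, Or.inl ⟨e ▸ hb, hlt⟩⟩
      · have hlt : j < i := by omega
        rcases h3 hlt with h | ⟨e, hb⟩
        · exact Or.inl h
        · exact Or.inr ⟨e, Or.inr ⟨e ▸ hb, hlt⟩⟩
    refine ⟨π₀, ⟨⟨hπ₀Sn, ?_⟩, ?_⟩, ?_⟩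
    · intro i j hij
      obtain ⟨hi, hj⟩ := hdom i j hij
      rw [hπ₀symm, hπ₀symm]
      exact (hgprec i hi j hj).mpr (hrprec i j hij)
    · intro i hi j hj hij
      rw [hπ₀symm, hπ₀symm] at hij
      have hp := (hgprec i hi j hj).mp hij
      rcases hp with hp | ⟨e, hc⟩
      · exact ⟨Or.inl hp, fun _ => Or.inl hp, fun _ => Or.inl hp⟩
      · refine ⟨Or.inr e, ?_, ?_⟩
        · intro hlt
          rcases hc with ⟨hb, -⟩ | ⟨-, hgt⟩
          · exact Or.inr ⟨e, e ▸ hb⟩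
          · omega
        · intro hgt
          rcases hc with ⟨-, hlt⟩ | ⟨hb, -⟩
          · omega
          · exact Or.inr ⟨e, e ▸ hb⟩
    · -- uniqueness
      intro π ⟨⟨hSn, _⟩, hE⟩
      -- π.symm refines prec
      have hmapsπ : ∀ i ∈ A, π.symm i ∈ A := by
        intro i hi
        by_contra hout
        have : π (π.symm i) = π.symm i := by
          apply hSn; rw [hA, Finset.mem_Icc] at hout; omega
        rw [Equiv.apply_symm_apply] at this
        exact hout (this ▸ hi)
      have hkey : ∀ i ∈ A, ∀ j ∈ A, prec f i j → π.symm i < π.symm j := by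
        intro i hi j hj hp
        by_contra hle
        have hne : i ≠ j := fun e => prec_irrefl f i (e ▸ hp)
        have : π.symm j < π.symm i := by
          rcases Nat.lt_trichotomy (π.symm i) (π.symm j) with h | h | h
          · exact absurd h hle
          · exact absurd (π.symm.injective h) hne
          · exact h
        exact prec_key hj hi (hE j hj i hi this) hp
      have hiff : ∀ i ∈ A, ∀ j ∈ A, (π.symm i < π.symm j ↔ prec f i j) := by
        intro i hi j hj
        refine ⟨fun h => ?_, hkey i hi j hj⟩
        have hne : i ≠ j := by rintro rfl; omega
        rcases prec_total (f := f) hne with hp | hp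
        · exact hp
        · exact absurd h (by have := hkey j hj i hi hp; omega)
      -- ranks agree
      have heq : ∀ i, π.symm i = π₀.symm i := by
        intro i
        by_cases hi : i ∈ A
        · rw [hπ₀symm, hgA i hi,
            rank_eq hmapsπ (π.symm.injective.injOn) hi]
          congr 1
          apply Finset.filter_congr
          intro j hj
          constructor
          · intro h
            rcases Nat.eq_or_lt_of_le h with h | h
            · exact Or.inr (π.symm.injective h)
            · exact Or.inl ((hiff j hj i hi).mp h)
          · rintro (h | rfl)
            · exact le_of_lt (hkey j hj i hi h)
            · exact le_refl _
        · have h1 : π.symm i = i := by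
            have : π i = i := by apply hSn; rw [hA, Finset.mem_Icc] at hi; omega
            exact (Equiv.symm_apply_eq π).mpr this.symm
          rw [h1, hπ₀symm, hgout i hi]
      have hss : π.symm = π₀.symm := Equiv.ext heq
      calc π = π.symm.symm := (Equiv.symm_symm π).symm
        _ = π₀.symm.symm := by rw [hss]
        _ = π₀ := Equiv.symm_symm π₀
  · -- backward direction
    rintro ⟨π, ⟨⟨-, hext⟩, hE⟩, -⟩
    intro i hi j hj hij
    exact hE i hi j hj (hext i j hij)
end

section
/- Up-down order decomposition: for permutations, the set E(π; S×T) of enriched π-partitions with values in S'×T' (with the up-down order) is in bijection with the disjoint union over all factorizations σ·τ = π in S_n of E(τ;S) × E(σ;T). -/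
/-- `(s,t) ≤⁺ (u,v)` in the up-down order on `S' × T'`: `s < u`, or `s = u` positive and
`t ≤⁺ v`, or `s = u` negative and `t ≥⁻ v`. -/
def udLEp {α β : Type*} [LinearOrder α] [LinearOrder β]
    (u v : (α × Bool) × (β × Bool)) : Prop :=
  sLT u.1 v.1 ∨ (u.1 = v.1 ∧
    ((u.1.2 = true ∧ sLEp u.2 v.2) ∨ (u.1.2 = false ∧ sLEm v.2 u.2)))

/-- `(s,t) ≤⁻ (u,v)` in the up-down order on `S' × T'`: `s < u`, or `s = u` positive and
`t ≤⁻ v`, or `s = u` negative and `t ≥⁺ v`. -/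
def udLEm {α β : Type*} [LinearOrder α] [LinearOrder β]
    (u v : (α × Bool) × (β × Bool)) : Prop :=
  sLT u.1 v.1 ∨ (u.1 = v.1 ∧
    ((u.1.2 = true ∧ sLEm u.2 v.2) ∨ (u.1.2 = false ∧ sLEp v.2 u.2)))

/-- Enriched `π`-partitions with values in a set carrying relations `≤⁺` (`lep`) and
`≤⁻` (`lem`): for labels `i` before `j` in the chain of `π`, `f i ≤⁺ f j` if `i < j` in `ℤ`
and `f i ≤⁻ f j` if `i > j` in `ℤ`. -/
def EPPgen {α : Type*} (n : ℕ) (lep lem : α → α → Prop)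
    (π : Equiv.Perm ℕ) (f : ℕ → α) : Prop :=
  ∀ i ∈ Finset.Icc 1 n, ∀ j ∈ Finset.Icc 1 n, π.symm i < π.symm j →
    (i < j → lep (f i) (f j)) ∧ (j < i → lem (f i) (f j))

/-!
Record a labelled letter `t ∈ T'` at position label `a` by the key `(t, ±a)` in lexicographic
order, with the sign of `t`. Then `g ∈ E(σ; T)` says exactly that these keys increase along the
chain of `σ`. For `g ∈ E(π τ⁻¹; T)` this forces `τ` to be the standardization of the keys of `g`
read along `π`, so `g` determines `τ`, and every `g` has such a `τ`. Comparing `F(π i)` with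
`F(π j)` in the up-down order then means comparing first letters in `S'` and, on a tie, the keys of
the second letters (upwards on a positive first letter, downwards on a negative one), i.e. the
order of `τ i` and `τ j`; this is exactly the condition `f ∈ E(τ; S)`.
-/

open Finset

section SignedKey

variable {α : Type*}

def signedKey (t : α × Bool) (a : ℕ) : (α ×ₗ Bool) ×ₗ ℤ :=
  toLex (toLex t, if t.2 then (a : ℤ) else -(a : ℤ))

lemma eq_of_signedKey_eq {t t' : α × Bool} {a b : ℕ} (h : signedKey t a = signedKey t' b) :
    a = b := by
  simp only [signedKey, toLex_inj, Prod.mk.injEq] at h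
  obtain ⟨rfl, h⟩ := h
  split_ifs at h <;> omega

variable [LinearOrder α]

lemma sLT_iff_toLex_lt (u v : α × Bool) : sLT u v ↔ toLex u < toLex v := by
  rw [Prod.Lex.lt_iff]
  simp [sLT, Bool.lt_iff]

lemma signedKey_lt_signedKey_iff {t t' : α × Bool} {a b : ℕ} :
    signedKey t a < signedKey t' b ↔ sLT t t' ∨ (t = t' ∧ if t.2 then a < b else b < a) := by
  rw [signedKey, signedKey, Prod.Lex.lt_iff, ofLex_toLex, ofLex_toLex, ← sLT_iff_toLex_lt,
    toLex_inj]
  refine or_congr_right (and_congr_right fun h => ?_)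
  subst h
  split_ifs <;> omega

lemma signedKey_lt_iff_sLEp_sLEm {t t' : α × Bool} {a b : ℕ} (hab : a ≠ b) :
    signedKey t a < signedKey t' b ↔ (a < b → sLEp t t') ∧ (b < a → sLEm t t') := by
  rw [signedKey_lt_signedKey_iff]
  rcases eq_or_ne t t' with rfl | hne <;> rcases hab.lt_or_gt with h | h
  all_goals obtain ⟨s, _ | _⟩ := t <;> simp [sLEp, sLEm, sLT, h.not_gt, *]

end SignedKey

lemma udLEp_udLEm_iff_signedKey_lt {S T : Type*} [LinearOrder S] [LinearOrder T]
    {x y : (S × Bool) × (T × Bool)} {a b : ℕ} (hab : a ≠ b) :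
    ((a < b → udLEp x y) ∧ (b < a → udLEm x y)) ↔ sLT x.1 y.1 ∨ (x.1 = y.1 ∧
      if x.1.2 then signedKey x.2 a < signedKey y.2 b else signedKey y.2 b < signedKey x.2 a) := by
  rw [signedKey_lt_iff_sLEp_sLEm hab, signedKey_lt_iff_sLEp_sLEm hab.symm]
  obtain ⟨⟨s, _ | _⟩, t⟩ := x <;> rcases hab.lt_or_gt with h | h <;>
    simp [udLEp, udLEm, h, h.not_gt]

lemma lt_iff_lt_of_lt_imp_lt {ι α β : Type*} [LinearOrder α] [Preorder β] {s : Set ι}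
    {τ : ι → α} {κ : ι → β} (hτ : Set.InjOn τ s) (h : ∀ i ∈ s, ∀ j ∈ s, τ i < τ j → κ i < κ j)
    {i j : ι} (hi : i ∈ s) (hj : j ∈ s) : τ i < τ j ↔ κ i < κ j := by
  refine ⟨h i hi j hj, fun hκ => ?_⟩
  rcases lt_trichotomy (τ i) (τ j) with hlt | heq | hgt
  · exact hlt
  · exact absurd hκ (hτ hi hj heq ▸ lt_irrefl _)
  · exact absurd hκ (lt_asymm (h j hj i hi hgt))

namespace IsSn

variable {n : ℕ} {σ τ : Equiv.Perm ℕ}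

lemma apply_eq_self (hσ : IsSn n σ) {i : ℕ} (hi : i ∉ Icc 1 n) : σ i = i :=
  hσ i (by rw [mem_Icc] at hi; omega)

lemma apply_mem_Icc_iff (hσ : IsSn n σ) (i : ℕ) : σ i ∈ Icc 1 n ↔ i ∈ Icc 1 n := by
  refine ⟨fun h => ?_, fun hi => ?_⟩
  · by_contra hi
    exact hi (hσ.apply_eq_self hi ▸ h)
  · by_contra h
    exact h (by rwa [σ.injective (hσ.apply_eq_self h)])

lemma symm (hσ : IsSn n σ) : IsSn n σ.symm := fun i hi => by
  rw [Equiv.symm_apply_eq, hσ i hi]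

lemma forall_mem_Icc_iff (hσ : IsSn n σ) {P : ℕ → Prop} :
    (∀ a ∈ Icc 1 n, P a) ↔ ∀ i ∈ Icc 1 n, P (σ i) :=
  ⟨fun h i hi => h _ ((hσ.apply_mem_Icc_iff i).2 hi), fun h a ha => by
    simpa using h (σ.symm a) ((hσ.symm.apply_mem_Icc_iff a).2 ha)⟩

lemma apply_eq_card (hσ : IsSn n σ) {i : ℕ} (hi : i ∈ Icc 1 n) :
    σ i = #{j ∈ Icc 1 n | σ j ≤ σ i} := by
  have hσi := mem_Icc.1 ((hσ.apply_mem_Icc_iff i).2 hi)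
  have : #{j ∈ Icc 1 n | σ j ≤ σ i} = #(Icc 1 (σ i)) := by
    refine card_bij' (fun j _ => σ j) (fun a _ => σ.symm a) (fun j hj => ?_) (fun a ha => ?_)
      (fun j _ => σ.symm_apply_apply j) (fun a _ => σ.apply_symm_apply a)
    · rw [mem_filter] at hj
      exact mem_Icc.2 ⟨(mem_Icc.1 ((hσ.apply_mem_Icc_iff j).2 hj.1)).1, hj.2⟩
    · rw [mem_Icc] at ha
      rw [mem_filter, Equiv.apply_symm_apply]
      exact ⟨(hσ.symm.apply_mem_Icc_iff a).2 (mem_Icc.2 ⟨ha.1, ha.2.trans hσi.2⟩), ha.2⟩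
  rw [this, Nat.card_Icc]
  omega

lemma ext_of_lt_iff_lt (hσ : IsSn n σ) (hτ : IsSn n τ)
    (h : ∀ i ∈ Icc 1 n, ∀ j ∈ Icc 1 n, σ i < σ j ↔ τ i < τ j) : σ = τ := by
  ext i
  by_cases hi : i ∈ Icc 1 n
  · rw [hσ.apply_eq_card hi, hτ.apply_eq_card hi]
    congr 1
    refine filter_congr fun j hj => ?_
    rw [← not_lt, ← not_lt, h i hi j hj]
  · rw [hσ.apply_eq_self hi, hτ.apply_eq_self hi]

end IsSn

lemma exists_isSn_lt_iff_lt {X : Type*} [LinearOrder X] (n : ℕ) {K : ℕ → X}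
    (hK : Set.InjOn K (Icc 1 n)) :
    ∃ τ : Equiv.Perm ℕ, IsSn n τ ∧ ∀ i ∈ Icc 1 n, ∀ j ∈ Icc 1 n, τ i < τ j ↔ K i < K j := by
  classical
  set P := Icc 1 n
  have hP : #P = n := by simp [P]
  have hQ : #(P.image K) = n := by rw [card_image_of_injOn hK, hP]
  let c : P ≃ P.image K := Equiv.ofBijective (fun i => ⟨K i, mem_image_of_mem K i.2⟩)
    ⟨fun i j hij => Subtype.ext (hK i.2 j.2 (congrArg Subtype.val hij)), fun ⟨_, hq⟩ => by
      obtain ⟨i, hi, rfl⟩ := mem_image.1 hq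
      exact ⟨⟨i, hi⟩, rfl⟩⟩
  let φ : Equiv.Perm P :=
    (c.trans ((P.image K).orderIsoOfFin hQ).symm.toEquiv).trans (P.orderIsoOfFin hP).toEquiv
  refine ⟨Equiv.Perm.ofSubtype φ, fun i hi => Equiv.Perm.ofSubtype_apply_of_not_mem φ
    (by simp only [P, mem_Icc]; omega), fun i hi j hj => ?_⟩
  rw [Equiv.Perm.ofSubtype_apply_of_mem φ hi, Equiv.Perm.ofSubtype_apply_of_mem φ hj,
    Subtype.coe_lt_coe]
  exact ((P.orderIsoOfFin hP).lt_iff_lt.trans ((P.image K).orderIsoOfFin hQ).symm.lt_iff_lt)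

namespace EPPgen

variable {n : ℕ} {π σ τ : Equiv.Perm ℕ}

lemma iff_forall_comp {α : Type*} {R₁ R₂ : α → α → Prop} {f : ℕ → α} (hσ : IsSn n σ) :
    EPPgen n R₁ R₂ π f ↔ ∀ i ∈ Icc 1 n, ∀ j ∈ Icc 1 n, π.symm (σ i) < π.symm (σ j) →
      (σ i < σ j → R₁ (f (σ i)) (f (σ j))) ∧ (σ j < σ i → R₂ (f (σ i)) (f (σ j))) :=
  hσ.forall_mem_Icc_iff.trans (forall₂_congr fun _ _ => hσ.forall_mem_Icc_iff)

lemma mul_inv_iff_lt_iff_lt {β : Type*} [LinearOrder β] {g : ℕ → β × Bool} (hπ : IsSn n π) :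
    EPPgen n sLEp sLEm (π * τ⁻¹) g ↔ ∀ i ∈ Icc 1 n, ∀ j ∈ Icc 1 n,
      τ i < τ j ↔ signedKey (g (π i)) (π i) < signedKey (g (π j)) (π j) := by
  have hsymm : ∀ i, (π * τ⁻¹).symm (π i) = τ i := fun i => by
    simp [Equiv.symm_apply_eq]
  have hne : ∀ {i j}, τ i < τ j → π i ≠ π j := fun h => π.injective.ne (τ.injective.ne_iff.1 h.ne)
  simp only [iff_forall_comp hπ, hsymm]
  refine ⟨fun h i hi j hj => lt_iff_lt_of_lt_imp_lt τ.injective.injOn (fun i hi j hj hlt =>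
    (signedKey_lt_iff_sLEp_sLEm (hne hlt)).2 (h i hi j hj hlt)) hi hj,
    fun h i hi j hj hlt => (signedKey_lt_iff_sLEp_sLEm (hne hlt)).1 ((h i hi j hj).1 hlt)⟩

lemma iff_updown {S T : Type*} [LinearOrder S] [LinearOrder T] {f : ℕ → S × Bool}
    {g : ℕ → T × Bool} (hπ : IsSn n π) (hτ : IsSn n τ)
    (hg : ∀ i ∈ Icc 1 n, ∀ j ∈ Icc 1 n,
      τ i < τ j ↔ signedKey (g (π i)) (π i) < signedKey (g (π j)) (π j)) :
    EPPgen n sLEp sLEm τ f ↔ EPPgen n udLEp udLEm π (fun m => (f (τ (π.symm m)), g m)) := by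
  rw [iff_forall_comp hτ, iff_forall_comp hπ]
  simp only [Equiv.symm_apply_apply]
  refine forall₂_congr fun i hi => forall₂_congr fun j hj => forall_congr' fun hij => ?_
  rw [← signedKey_lt_iff_sLEp_sLEm (τ.injective.ne hij.ne), signedKey_lt_signedKey_iff,
    udLEp_udLEm_iff_signedKey_lt (π.injective.ne hij.ne), ← hg i hi j hj, ← hg j hj i hi]

end EPPgen

theorem updown_decomposition_general {S T : Type*} [LinearOrder S] [LinearOrder T]
    (n : ℕ) (π : Equiv.Perm ℕ) (hπ : IsSn n π) :
    Set.BijOn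
      (fun q : Equiv.Perm ℕ × (ℕ → S × Bool) × (ℕ → T × Bool) =>
        fun m => (q.2.1 (q.1 (π.symm m)), q.2.2 m))
      {q : Equiv.Perm ℕ × (ℕ → S × Bool) × (ℕ → T × Bool) |
        IsSn n q.1 ∧ EPPgen n sLEp sLEm q.1 q.2.1 ∧
          EPPgen n sLEp sLEm (π * q.1⁻¹) q.2.2}
      {F : ℕ → (S × Bool) × (T × Bool) | EPPgen n udLEp udLEm π F} := by
  refine ⟨?_, ?_, ?_⟩
  · rintro ⟨τ, f, g⟩ ⟨hτ, hf, hg⟩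
    exact (EPPgen.iff_updown hπ hτ ((EPPgen.mul_inv_iff_lt_iff_lt hπ).1 hg)).1 hf
  · rintro ⟨τ, f, g⟩ ⟨hτ, -, hg⟩ ⟨τ', f', g'⟩ ⟨hτ', -, hg'⟩ hF
    obtain rfl : g = g' := funext fun m => congrArg Prod.snd (congrFun hF m)
    obtain rfl : τ = τ' := hτ.ext_of_lt_iff_lt hτ' fun i hi j hj =>
      ((EPPgen.mul_inv_iff_lt_iff_lt hπ).1 hg i hi j hj).trans
        ((EPPgen.mul_inv_iff_lt_iff_lt hπ).1 hg' i hi j hj).symm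
    obtain rfl : f = f' := funext fun m => by
      simpa using congrArg Prod.fst (congrFun hF (π (τ.symm m)))
    rfl
  · intro F hF
    let g : ℕ → T × Bool := fun m => (F m).2
    have hκ : Set.InjOn (fun i => signedKey (g (π i)) (π i)) (Icc 1 n) :=
      fun i _ j _ h => π.injective (eq_of_signedKey_eq h)
    obtain ⟨τ, hτ, hg⟩ := exists_isSn_lt_iff_lt n hκ
    have hF' : (fun m => ((F (π (τ.symm (τ (π.symm m))))).1, g m)) = F := by
      simp [g]
    refine ⟨(τ, fun m => (F (π (τ.symm m))).1, g),
      ⟨hτ, (EPPgen.iff_updown hπ hτ hg).2 ?_, (EPPgen.mul_inv_iff_lt_iff_lt hπ).2 hg⟩, hF'⟩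
    rwa [hF']

/-- Theorem 2.5 (type A): `E(π; S×T)` with the up-down order is in bijection with the
disjoint union over factorizations `σ·τ = π` of `E(τ;S) × E(σ;T)`. The bijection sends
`(τ, f, g)` (with `σ = π τ⁻¹`, `f ∈ E(τ;S)`, `g ∈ E(σ;T)`) to
`F(m) = (f(τ(π⁻¹(m))), g(m))`, i.e. `F(π(i)) = (s_i, t_{τ(i)})` in coordinates. -/
theorem updown_decomposition {S T : Type*} [LinearOrder S] [LinearOrder T]
    [Countable S] [Countable T] (n : ℕ) (π : Equiv.Perm ℕ) (hπ : IsSn n π) :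
    Set.BijOn
      (fun q : Equiv.Perm ℕ × (ℕ → S × Bool) × (ℕ → T × Bool) =>
        fun m => (q.2.1 (q.1 (π.symm m)), q.2.2 m))
      {q : Equiv.Perm ℕ × (ℕ → S × Bool) × (ℕ → T × Bool) |
        IsSn n q.1 ∧ EPPgen n sLEp sLEm q.1 q.2.1 ∧
          EPPgen n sLEp sLEm (π * q.1⁻¹) q.2.2}
      {F : ℕ → (S × Bool) × (T × Bool) | EPPgen n udLEp udLEm π F} :=
  updown_decomposition_general n π hπ
end

section
/- Every subset I ⊆ {0,...,n-1} with no two consecutive elements is realized as the type B peak set Pe_B(π) of some signed permutation π ∈ B_n. -/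
/-- A signed permutation in `B_n`: a permutation of `ℤ` with `π(-i) = -π(i)` fixing all
`i` with `|i| > n` (in particular `π 0 = 0`). -/
def IsBn (n : ℕ) (π : Equiv.Perm ℤ) : Prop :=
  (∀ i : ℤ, π (-i) = -π i) ∧ ∀ i : ℤ, (n : ℤ) < |i| → π i = i

/-- The type B peak set `Pe_B(π) = {i ∈ [0,n-1] : π(i-1) < π(i) > π(i+1)}`, with
`π(0) = 0` and a peak at position `0` exactly when `π(1) < 0`. -/
def bPeaks (n : ℕ) (π : Equiv.Perm ℤ) : Finset ℕ :=
  (Finset.range n).filter fun i =>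
    if i = 0 then π 1 < 0
    else π ((i : ℤ) - 1) < π (i : ℤ) ∧ π ((i : ℤ) + 1) < π (i : ℤ)

/-- The involution flipping the sign of `±(j+1)` for `j ∈ I`. -/
def signFlip (I : Finset ℕ) : Equiv.Perm ℤ where
  toFun i := if i.natAbs - 1 ∈ I then -i else i
  invFun i := if i.natAbs - 1 ∈ I then -i else i
  left_inv i := by by_cases h : i.natAbs - 1 ∈ I <;> simp [h, Int.natAbs_neg]
  right_inv i := by by_cases h : i.natAbs - 1 ∈ I <;> simp [h, Int.natAbs_neg]

lemma signFlip_apply (I : Finset ℕ) (i : ℤ) :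
    signFlip I i = if i.natAbs - 1 ∈ I then -i else i := rfl

lemma signFlip_nat (I : Finset ℕ) (k : ℕ) :
    signFlip I (k : ℤ) = if k - 1 ∈ I then -(k : ℤ) else (k : ℤ) := by
  simp [signFlip_apply]

/-- Every sparse subset of `{0,…,n-1}` is the type B peak set of some signed
permutation in `B_n`. -/
theorem typeB_peaks_surjective (n : ℕ) (I : Finset ℕ) (hI : I ⊆ Finset.range n)
    (hsparse : ∀ i ∈ I, i + 1 ∉ I) :
    ∃ π : Equiv.Perm ℤ, IsBn n π ∧ bPeaks n π = I := by
  refine ⟨signFlip I, ⟨?_, ?_⟩, ?_⟩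
  · intro i
    simp only [signFlip_apply, Int.natAbs_neg]
    split_ifs <;> ring
  · intro i hi
    rw [Int.abs_eq_natAbs] at hi
    have h : i.natAbs - 1 ∉ I := by
      intro hmem
      have h1 := Finset.mem_range.mp (hI hmem)
      omega
    simp [signFlip_apply, h]
  · ext i
    simp only [bPeaks, Finset.mem_filter, Finset.mem_range]
    by_cases h0 : i = 0
    · subst h0
      simp only [if_pos rfl]
      have hv : signFlip I (1 : ℤ) = if 0 ∈ I then -(1:ℤ) else 1 := by
        simpa using signFlip_nat I 1
      constructor
      · rintro ⟨-, hlt⟩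
        by_contra hc
        rw [if_pos trivial, hv, if_neg hc] at hlt
        omega
      · intro hmem
        have hn := Finset.mem_range.mp (hI hmem)
        rw [hv, if_pos hmem]
        exact ⟨hn, by norm_num⟩
    · rw [if_neg h0]
      have hi1 : 1 ≤ i := Nat.one_le_iff_ne_zero.mpr h0
      have e1 : (i : ℤ) - 1 = ((i - 1 : ℕ) : ℤ) := by omega
      have e2 : (i : ℤ) + 1 = ((i + 1 : ℕ) : ℤ) := by push_cast; ring
      have vL : signFlip I ((i : ℤ) - 1)
          = if i - 2 ∈ I then -((i : ℤ) - 1) else (i : ℤ) - 1 := by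
        rw [e1, signFlip_nat]
        have : i - 1 - 1 = i - 2 := by omega
        rw [this]
      have vM : signFlip I (i : ℤ)
          = if i - 1 ∈ I then -(i : ℤ) else (i : ℤ) := signFlip_nat I i
      have vR : signFlip I ((i : ℤ) + 1)
          = if i ∈ I then -((i : ℤ) + 1) else (i : ℤ) + 1 := by
        rw [e2, signFlip_nat]
        have : i + 1 - 1 = i := by omega
        rw [this]
      constructor
      · rintro ⟨-, hpL, hpR⟩
        by_contra hc
        by_cases hm : i - 1 ∈ I
        · rw [vM, if_pos hm] at hpL
          rw [vL] at hpL
          split_ifs at hpL <;> omega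
        · rw [vM, if_neg hm] at hpR
          rw [vR, if_neg hc] at hpR
          omega
      · intro hmem
        have hn := Finset.mem_range.mp (hI hmem)
        have hm : i - 1 ∉ I := by
          intro hm'
          have h2 := hsparse _ hm'
          rw [Nat.sub_add_cancel hi1] at h2
          exact h2 hmem
        refine ⟨hn, ?_, ?_⟩
        · rw [vM, if_neg hm, vL]
          split_ifs <;> omega
        · rw [vM, if_neg hm, vR, if_pos hmem]
          omega
end
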